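/- arXiv:nlin/0205067 — 5 statements merged into one kernel-verified Lean document; each statement's English description precedes it below -/
import Mathlib

section
/- Let θ ∈ (0,1), e ∈ [0,1], p ∈ (0,1/2) and r = 1−p, and consider a population with no reciprocators (δ = 0). Then the function g(γ) = π_a(γ,0) − π_s(γ,0) satisfies g(0) = −2p and is differentiable at γ = 0 with g′(0) = (1−e)·θ/(1−θ); equivalently, π_a(γ,0) − π_s(γ,0) = −2p + (1−e)·θ/(1−θ)·γ + o(γ) as γ → 0. -/
/-!
With `r = 1 − p` the exploration terms of `g` add up to the constant `−2ep`, and with `δ = 0`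
both denominators are `D γ = 1 − (1 − γ)θ = (1 − θ) + θγ`. Over this common denominator the
remaining numerator is `−2p · D γ + θγ`, so wherever `D γ ≠ 0`, in particular near `γ = 0`,
`g γ = −2p + (1 − e) · θγ / ((1 − θ) + θγ)`.
-/

theorem hasDerivAt_mul_div_add_mul_zero {𝕜 : Type*} [NontriviallyNormedField 𝕜] {a b c : 𝕜}
    (hb : b ≠ 0) : HasDerivAt (fun x => a * x / (b + c * x)) (a / b) 0 := by
  have hnum : HasDerivAt (fun x : 𝕜 => a * x) a 0 := by
    simpa using (hasDerivAt_id (0 : 𝕜)).const_mul a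
  have hden : HasDerivAt (fun x : 𝕜 => b + c * x) c 0 := by
    simpa using ((hasDerivAt_id (0 : 𝕜)).const_mul c).const_add b
  refine (hnum.div hden (by simpa using hb)).congr_deriv ?_
  simp only [mul_zero, zero_mul, add_zero, sub_zero]
  field_simp

theorem altruist_selfish_payoff_expansion_general (θ e p : ℝ)
    (hθ : θ ∈ Set.Ioo (0:ℝ) 1) :
    let r := 1 - p
    let πa : ℝ → ℝ := fun γ =>
      (1 - e) * (r * θ * 0 / (1 - (1 - γ) * θ)
        + r * (2 * γ + 0) / (1 - (1 - γ - 0) * θ)) + e * r * (0 + 2 * γ)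
    let πs : ℝ → ℝ := fun γ =>
      (1 - e) * ((2 * p * (1 - γ) * (1 - θ) + γ) / (1 - (1 - γ) * θ)
        + (1 - θ) * γ / (1 - (1 - γ - 0) * θ)) + 2 * e * (p * (1 - γ) + γ)
    let g : ℝ → ℝ := fun γ => πa γ - πs γ
    g 0 = -(2 * p) ∧ HasDerivAt g ((1 - e) * θ / (1 - θ)) 0 := by
  intro r πa πs g
  have hθ1 : 1 - θ ≠ 0 := sub_ne_zero.mpr hθ.2.ne'
  have hclosed : ∀ γ, 1 - θ + θ * γ ≠ 0 →
      g γ = -(2 * p) + (1 - e) * (θ * γ / (1 - θ + θ * γ)) := by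
    intro γ hγ
    have hD : 1 - (1 - γ) * θ = 1 - θ + θ * γ := by ring
    simp only [g, πa, πs, r, sub_zero, add_zero, zero_add, mul_zero, zero_div, hD]
    linear_combination (2 * p * (e - 1)) * mul_inv_cancel₀ hγ
  have hnear : g =ᶠ[nhds 0] fun γ => -(2 * p) + (1 - e) * (θ * γ / (1 - θ + θ * γ)) := by
    have hcont : Continuous fun γ : ℝ => 1 - θ + θ * γ := by fun_prop
    filter_upwards [hcont.continuousAt.eventually_ne (by simpa using hθ1)] using hclosed
  refine ⟨by simpa using hnear.eq_of_nhds, ?_⟩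
  have hderiv :=
    ((hasDerivAt_mul_div_add_mul_zero (a := θ) (c := θ) hθ1).const_mul (1 - e)).const_add (-(2 * p))
  rw [mul_div_assoc]
  exact hderiv.congr_of_eventuallyEq hnear

/-- With `r = 1 − p` and no reciprocators, the payoff difference
`g γ = π_a(γ,0) − π_s(γ,0)` satisfies `g 0 = −2p` and `g′ 0 = (1−e)·θ/(1−θ)`. -/
theorem altruist_selfish_payoff_expansion (θ e p : ℝ)
    (hθ : θ ∈ Set.Ioo (0:ℝ) 1) (he : e ∈ Set.Icc (0:ℝ) 1)
    (hp : p ∈ Set.Ioo (0:ℝ) (1/2)) :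
    let r := 1 - p
    let πa : ℝ → ℝ := fun γ =>
      (1 - e) * (r * θ * 0 / (1 - (1 - γ) * θ)
        + r * (2 * γ + 0) / (1 - (1 - γ - 0) * θ)) + e * r * (0 + 2 * γ)
    let πs : ℝ → ℝ := fun γ =>
      (1 - e) * ((2 * p * (1 - γ) * (1 - θ) + γ) / (1 - (1 - γ) * θ)
        + (1 - θ) * γ / (1 - (1 - γ - 0) * θ)) + 2 * e * (p * (1 - γ) + γ)
    let g : ℝ → ℝ := fun γ => πa γ - πs γ
    g 0 = -(2 * p) ∧ HasDerivAt g ((1 - e) * θ / (1 - θ)) 0 :=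
  altruist_selfish_payoff_expansion_general θ e p hθ
end

section
/- For all θ ∈ (0,1), e ∈ [0,1] and 0 < p < r < 1, there exists γ₀ ∈ (0,1) such that for every γ ∈ (0,γ₀), π_a(γ,0) < π_s(γ,0). Hence, in an infinite population containing only selfish and altruist agents, the all-selfish population is evolutionarily stable: a sufficiently small proportion of invading altruists always earns strictly less than the selfish agents. -/
/-- All-selfish is an ESS against altruist invaders: for sufficiently small
proportion `γ` of altruists, altruists earn strictly less than selfish agents. -/
theorem all_selfish_ESS (θ e p r : ℝ)
    (hθ : θ ∈ Set.Ioo (0:ℝ) 1) (he : e ∈ Set.Icc (0:ℝ) 1)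
    (hp : 0 < p) (hpr : p < r) (hr : r < 1) :
    let πs : ℝ → ℝ := fun γ =>
      (1 - e) * ((2 * p * (1 - γ) * (1 - θ) + γ) / (1 - (1 - γ) * θ)
        + (1 - θ) * γ / (1 - (1 - γ) * θ)) + 2 * e * (p * (1 - γ) + γ)
    let πa : ℝ → ℝ := fun γ =>
      (1 - e) * (2 * r * γ / (1 - (1 - γ) * θ)) + 2 * e * r * γ
    ∃ γ₀ ∈ Set.Ioo (0:ℝ) 1, ∀ γ ∈ Set.Ioo (0:ℝ) γ₀, πa γ < πs γ := by
  intro πs πa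
  obtain ⟨hθ0, hθ1⟩ := hθ
  set f : ℝ → ℝ := fun γ => πs γ - πa γ with hf
  have hd0 : (1:ℝ) - (1 - 0) * θ ≠ 0 := by norm_num; linarith
  have hc : ContinuousAt f 0 := by
    have hden : ContinuousAt (fun γ : ℝ => 1 - (1 - γ) * θ) 0 := by fun_prop
    apply ContinuousAt.sub
    · apply ContinuousAt.add
      · apply ContinuousAt.mul continuousAt_const
        apply ContinuousAt.add
        · exact ContinuousAt.div (by fun_prop) hden hd0
        · exact ContinuousAt.div (by fun_prop) hden hd0
      · fun_prop
    · apply ContinuousAt.add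
      · exact ContinuousAt.mul continuousAt_const (ContinuousAt.div (by fun_prop) hden hd0)
      · fun_prop
  have hf0 : f 0 = 2 * p := by
    simp only [hf, πs, πa]
    have h1θ : (1:ℝ) - θ ≠ 0 := by linarith
    field_simp
    ring
  have hpos : 0 < f 0 := by rw [hf0]; linarith
  have hev : ∀ᶠ γ in nhds (0:ℝ), 0 < f γ := hc.eventually (eventually_gt_nhds hpos)
  rw [Metric.eventually_nhds_iff] at hev
  obtain ⟨ε, hε, hball⟩ := hev
  refine ⟨min ε 1 / 2, ⟨by positivity, ?_⟩, ?_⟩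
  · have : min ε 1 ≤ 1 := min_le_right _ _
    linarith
  · intro γ ⟨hγ0, hγlt⟩
    have hγε : |γ - 0| < ε := by
      rw [sub_zero, abs_of_pos hγ0]
      have : min ε 1 ≤ ε := min_le_left _ _
      linarith
    have := hball hγε
    simp only [hf] at this
    linarith
end

section
/- Let θ ∈ (0,1), e ∈ [0,1], γ ∈ (0,1], δ ∈ [0,1] with γ + δ ≤ 1. Then the difference of the mean activities of altruists and reciprocators satisfies the exact identity Act_a(γ,δ) − Act_r(γ,δ) = (1−e)·δθ/(1−(1−γ)θ); in particular Act_a ≥ Act_r, with strict inequality whenever e < 1 and δ > 0. -/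
/-!
The `B`-terms (connections to altruists) enter both activities with the same coefficient
`e γ + (1 - e) γ / (γ + δ)`, so they cancel and the gap is `A · (1 - e) δ / γ`. Since
`A = γ θ / (1 - (1 - γ) θ)`, the factor `γ` cancels, leaving a quotient of nonnegative
numbers by the positive `1 - (1 - γ) θ = (1 - θ) + γ θ`.
-/

theorem one_sub_div_one_sub_mul {K : Type*} [Field K] {γ θ : K} (h : 1 - (1 - γ) * θ ≠ 0) :
    1 - (1 - θ) / (1 - (1 - γ) * θ) = γ * θ / (1 - (1 - γ) * θ) := by
  rw [eq_div_iff h, sub_mul, div_mul_cancel₀ _ h]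
  ring

theorem one_sub_one_sub_mul_pos {γ θ : ℝ} (hγ : 0 ≤ γ) (hθ₀ : 0 ≤ θ) (hθ₁ : θ < 1) :
    0 < 1 - (1 - γ) * θ := by
  nlinarith [mul_nonneg hγ hθ₀]

theorem activity_altruist_sub_reciprocator {K : Type*} [Field K] (A B e γ δ : K) :
    (1 + A * (e * (1 - γ) + (1 - e) * δ / γ) + B * (e * γ + (1 - e) * γ / (γ + δ))
        + (1 - A) * (1 - γ) + (1 - B) * γ)
      - (1 + e * A * (1 - γ) + B * ((1 - e) * γ / (γ + δ) + e * γ)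
        + (1 - A) * (1 - γ) + (1 - B) * γ)
      = A * ((1 - e) * δ / γ) := by
  ring

theorem altruists_more_active_than_reciprocators_general (θ e γ δ : ℝ)
    (hθ : θ ∈ Set.Ioo (0:ℝ) 1) (he : e ∈ Set.Icc (0:ℝ) 1)
    (hγ : γ ∈ Set.Ioc (0:ℝ) 1) (hδ : δ ∈ Set.Icc (0:ℝ) 1) :
    let A := 1 - (1 - θ) / (1 - (1 - γ) * θ)
    let B := 1 - (1 - θ) / (1 - (1 - γ - δ) * θ)
    let ActR := 1 + e * A * (1 - γ) + B * ((1 - e) * γ / (γ + δ) + e * γ)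
      + (1 - A) * (1 - γ) + (1 - B) * γ
    let ActA := 1 + A * (e * (1 - γ) + (1 - e) * δ / γ)
      + B * (e * γ + (1 - e) * γ / (γ + δ))
      + (1 - A) * (1 - γ) + (1 - B) * γ
    ActA - ActR = (1 - e) * δ * θ / (1 - (1 - γ) * θ)
      ∧ ActR ≤ ActA ∧ (e < 1 → 0 < δ → ActR < ActA) := by
  intro A B ActR ActA
  obtain ⟨hθ₀, hθ₁⟩ := hθ
  have hD : 0 < 1 - (1 - γ) * θ := one_sub_one_sub_mul_pos hγ.1.le hθ₀.le hθ₁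
  have hA : A = γ * θ / (1 - (1 - γ) * θ) := one_sub_div_one_sub_mul hD.ne'
  have gap : ActA - ActR = (1 - e) * δ * θ / (1 - (1 - γ) * θ) := by
    rw [activity_altruist_sub_reciprocator, hA]
    field_simp [hγ.1.ne']
  have he' : 0 ≤ 1 - e := sub_nonneg.2 he.2
  refine ⟨gap, sub_nonneg.1 ?_, fun he₁ hδ₀ => sub_pos.1 ?_⟩
  · rw [gap]
    exact div_nonneg (mul_nonneg (mul_nonneg he' hδ.1) hθ₀.le) hD.le
  · rw [gap]
    exact div_pos (mul_pos (mul_pos (sub_pos.2 he₁) hδ₀) hθ₀) hD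

/-- Exact identity for the activity gap between altruists and reciprocators:
`Act_a − Act_r = (1−e)·δθ/(1−(1−γ)θ)`; hence `Act_a ≥ Act_r`, strictly when
`e < 1` and `δ > 0`. -/
theorem altruists_more_active_than_reciprocators (θ e γ δ : ℝ)
    (hθ : θ ∈ Set.Ioo (0:ℝ) 1) (he : e ∈ Set.Icc (0:ℝ) 1)
    (hγ : γ ∈ Set.Ioc (0:ℝ) 1) (hδ : δ ∈ Set.Icc (0:ℝ) 1)
    (hsum : γ + δ ≤ 1) :
    let A := 1 - (1 - θ) / (1 - (1 - γ) * θ)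
    let B := 1 - (1 - θ) / (1 - (1 - γ - δ) * θ)
    let ActR := 1 + e * A * (1 - γ) + B * ((1 - e) * γ / (γ + δ) + e * γ)
      + (1 - A) * (1 - γ) + (1 - B) * γ
    let ActA := 1 + A * (e * (1 - γ) + (1 - e) * δ / γ)
      + B * (e * γ + (1 - e) * γ / (γ + δ))
      + (1 - A) * (1 - γ) + (1 - B) * γ
    ActA - ActR = (1 - e) * δ * θ / (1 - (1 - γ) * θ)
      ∧ ActR ≤ ActA ∧ (e < 1 → 0 < δ → ActR < ActA) :=
  altruists_more_active_than_reciprocators_general θ e γ δ hθ he hγ hδ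
end

section
/- Let θ ∈ (0,1), e ∈ [0,1], γ ∈ (0,1], δ ∈ [0,1] with γ + δ ≤ 1. Then the difference of the mean activities of reciprocators and selfish agents satisfies the exact identity Act_r(γ,δ) − Act_s(γ,δ) = (1−e)·γθ/(1−(1−γ−δ)θ); in particular Act_r ≥ Act_s, with strict inequality whenever e < 1 and γ > 0. -/
/-!
The activities of reciprocators and selfish agents differ only in the interactions initiated by
connected altruists: besides exploration, a reciprocator also receives the altruists'
non-exploring share `(1 − e) γ / (γ + δ)`. So the gap is `(1 − e) γ B / (γ + δ)`, and since
`B = (γ + δ) θ / (1 − (1 − γ − δ) θ)` the factor `γ + δ` cancels.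
-/

lemma one_sub_mul_pos {θ p : ℝ} (hθ0 : 0 ≤ θ) (hθ1 : θ < 1) (hp : 0 ≤ p) :
    0 < 1 - (1 - p) * θ := by
  nlinarith

lemma one_sub_div_one_sub_mul_s11 {θ p : ℝ} (hD : 1 - (1 - p) * θ ≠ 0) :
    1 - (1 - θ) / (1 - (1 - p) * θ) = p * θ / (1 - (1 - p) * θ) := by
  rw [eq_div_iff hD, sub_mul, div_mul_cancel₀ _ hD]
  ring

lemma activity_reciprocator_sub_selfish (A B e γ δ : ℝ) :
    (1 + e * A * (1 - γ) + B * ((1 - e) * γ / (γ + δ) + e * γ)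
        + (1 - A) * (1 - γ) + (1 - B) * γ)
      - (1 + e * (A * (1 - γ) + B * γ) + (1 - A) * (1 - γ) + (1 - B) * γ)
      = (1 - e) * γ / (γ + δ) * B := by
  ring

theorem reciprocators_more_active_than_selfish_general (θ e γ δ : ℝ)
    (hθ : θ ∈ Set.Ioo (0:ℝ) 1) (he : e ∈ Set.Icc (0:ℝ) 1)
    (hγ : γ ∈ Set.Ioc (0:ℝ) 1) (hδ : δ ∈ Set.Icc (0:ℝ) 1) :
    let A := 1 - (1 - θ) / (1 - (1 - γ) * θ)
    let B := 1 - (1 - θ) / (1 - (1 - γ - δ) * θ)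
    let ActS := 1 + e * (A * (1 - γ) + B * γ)
      + (1 - A) * (1 - γ) + (1 - B) * γ
    let ActR := 1 + e * A * (1 - γ) + B * ((1 - e) * γ / (γ + δ) + e * γ)
      + (1 - A) * (1 - γ) + (1 - B) * γ
    ActR - ActS = (1 - e) * γ * θ / (1 - (1 - γ - δ) * θ)
      ∧ ActS ≤ ActR ∧ (e < 1 → 0 < γ → ActS < ActR) := by
  intro A B ActS ActR
  have hγδ : 0 < γ + δ := add_pos_of_pos_of_nonneg hγ.1 hδ.1
  have hD : 0 < 1 - (1 - (γ + δ)) * θ := one_sub_mul_pos hθ.1.le hθ.2 hγδ.le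
  have hB : B = (γ + δ) * θ / (1 - (1 - (γ + δ)) * θ) := by
    simpa only [B, sub_sub] using one_sub_div_one_sub_mul_s11 hD.ne'
  have gap : ActR - ActS = (1 - e) * γ * θ / (1 - (1 - γ - δ) * θ) := by
    rw [activity_reciprocator_sub_selfish, hB, sub_sub]
    field_simp
  refine ⟨gap, ?_, fun he1 _ => ?_⟩
  · rw [← sub_nonneg, gap, sub_sub]
    exact div_nonneg (mul_nonneg (mul_nonneg (sub_nonneg.2 he.2) hγ.1.le) hθ.1.le) hD.le
  · rw [← sub_pos, gap, sub_sub]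
    exact div_pos (mul_pos (mul_pos (sub_pos.2 he1) hγ.1) hθ.1) hD

/-- Exact identity for the activity gap between reciprocators and selfish agents:
`Act_r − Act_s = (1−e)·γθ/(1−(1−γ−δ)θ)`; hence `Act_r ≥ Act_s`, strictly when
`e < 1` and `γ > 0`. -/
theorem reciprocators_more_active_than_selfish (θ e γ δ : ℝ)
    (hθ : θ ∈ Set.Ioo (0:ℝ) 1) (he : e ∈ Set.Icc (0:ℝ) 1)
    (hγ : γ ∈ Set.Ioc (0:ℝ) 1) (hδ : δ ∈ Set.Icc (0:ℝ) 1)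
    (hsum : γ + δ ≤ 1) :
    let A := 1 - (1 - θ) / (1 - (1 - γ) * θ)
    let B := 1 - (1 - θ) / (1 - (1 - γ - δ) * θ)
    let ActS := 1 + e * (A * (1 - γ) + B * γ)
      + (1 - A) * (1 - γ) + (1 - B) * γ
    let ActR := 1 + e * A * (1 - γ) + B * ((1 - e) * γ / (γ + δ) + e * γ)
      + (1 - A) * (1 - γ) + (1 - B) * γ
    ActR - ActS = (1 - e) * γ * θ / (1 - (1 - γ - δ) * θ)
      ∧ ActS ≤ ActR ∧ (e < 1 → 0 < γ → ActS < ActR) :=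
  reciprocators_more_active_than_selfish_general θ e γ δ hθ he hγ hδ
end

section
/- Let θ ∈ (0,1), e ∈ [0,1], γ ∈ (0,1], δ ∈ [0,1] with γ + δ ≤ 1. Then Act_s(γ,δ) ≥ 1 > 0 and the relative activities satisfy RA_a = Act_a/Act_s ≥ RA_r = Act_r/Act_s ≥ 1: selfish agents are the least socially active type and altruists are the most active of all types. -/
/-- Selfish agents are the least socially active type, altruists the most:
`Act_s ≥ 1 > 0` and the relative activities satisfy `RA_a ≥ RA_r ≥ 1`. -/
theorem relative_activity_ordering (θ e γ δ : ℝ)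
    (hθ : θ ∈ Set.Ioo (0:ℝ) 1) (he : e ∈ Set.Icc (0:ℝ) 1)
    (hγ : γ ∈ Set.Ioc (0:ℝ) 1) (hδ : δ ∈ Set.Icc (0:ℝ) 1)
    (hsum : γ + δ ≤ 1) :
    let A := 1 - (1 - θ) / (1 - (1 - γ) * θ)
    let B := 1 - (1 - θ) / (1 - (1 - γ - δ) * θ)
    let ActS := 1 + e * (A * (1 - γ) + B * γ)
      + (1 - A) * (1 - γ) + (1 - B) * γ
    let ActR := 1 + e * A * (1 - γ) + B * ((1 - e) * γ / (γ + δ) + e * γ)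
      + (1 - A) * (1 - γ) + (1 - B) * γ
    let ActA := 1 + A * (e * (1 - γ) + (1 - e) * δ / γ)
      + B * (e * γ + (1 - e) * γ / (γ + δ))
      + (1 - A) * (1 - γ) + (1 - B) * γ
    (1 ≤ ActS ∧ 0 < ActS) ∧ 1 ≤ ActR / ActS ∧ ActR / ActS ≤ ActA / ActS := by
  intro A B ActS ActR ActA
  obtain ⟨hθ0, hθ1⟩ := hθ
  obtain ⟨he0, he1⟩ := he
  obtain ⟨hγ0, hγ1⟩ := hγ
  obtain ⟨hδ0, hδ1⟩ := hδ
  have hdA : (0:ℝ) < 1 - (1 - γ) * θ := by nlinarith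
  have hdB : (0:ℝ) < 1 - (1 - γ - δ) * θ := by nlinarith
  have hA0 : 0 ≤ A := by
    have : (1 - θ) / (1 - (1 - γ) * θ) ≤ 1 := by
      rw [div_le_one hdA]; nlinarith
    simp only [A]; linarith
  have hA1 : A ≤ 1 := by
    have : 0 ≤ (1 - θ) / (1 - (1 - γ) * θ) :=
      div_nonneg (by linarith) hdA.le
    simp only [A]; linarith
  have hB0 : 0 ≤ B := by
    have : (1 - θ) / (1 - (1 - γ - δ) * θ) ≤ 1 := by
      rw [div_le_one hdB]; nlinarith
    simp only [B]; linarith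
  have hB1 : B ≤ 1 := by
    have : 0 ≤ (1 - θ) / (1 - (1 - γ - δ) * θ) :=
      div_nonneg (by linarith) hdB.le
    simp only [B]; linarith
  have hγδ : (0:ℝ) < γ + δ := by linarith
  have hS1 : 1 ≤ ActS := by
    have h1 : 0 ≤ e * (A * (1 - γ) + B * γ) := by
      apply mul_nonneg he0; nlinarith
    have h2 : 0 ≤ (1 - A) * (1 - γ) := by nlinarith
    have h3 : 0 ≤ (1 - B) * γ := by nlinarith
    simp only [ActS]; linarith
  have hS0 : 0 < ActS := lt_of_lt_of_le one_pos hS1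
  have hSR : ActS ≤ ActR := by
    have h : 0 ≤ B * ((1 - e) * γ / (γ + δ)) :=
      mul_nonneg hB0 (div_nonneg (mul_nonneg (by linarith) hγ0.le) hγδ.le)
    have : ActR - ActS = B * ((1 - e) * γ / (γ + δ)) := by
      simp only [ActR, ActS]; ring
    rw [← this] at h
    exact sub_nonneg.mp h
  have hRA : ActR ≤ ActA := by
    have h : 0 ≤ A * ((1 - e) * δ / γ) :=
      mul_nonneg hA0 (div_nonneg (mul_nonneg (by linarith) hδ0) hγ0.le)
    have : ActA - ActR = A * ((1 - e) * δ / γ) := by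
      simp only [ActA, ActR]; ring
    rw [← this] at h
    exact sub_nonneg.mp h
  refine ⟨⟨hS1, hS0⟩, ?_, ?_⟩
  · rw [le_div_iff₀ hS0]; linarith
  · exact (div_le_div_iff_of_pos_right hS0).mpr hRA
end
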